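/- arXiv:2106.04894 — 5 statements merged into one kernel-verified Lean document; each statement's English description precedes it below -/
import Mathlib

section
/- Let 0 ≤ λ_1,...,λ_m < 1/2 and let a_1,...,a_n ∈ R^d satisfy ρ(a_1,...,a_n) ≤ λ_1·λ_2·...·λ_m. Then there exists a partition {1,...,n} = I_1 ⊔ ... ⊔ I_m such that for each j, max_{x∈R^d} Pr(Σ_{i∈I_j} a_iξ_i = x) ≤ 2λ_j. -/
/-!
Induction on `m`, peeling off one part at a time. Given `ρ(S) ≤ λ₀ ν`, pick `I ⊆ S` minimal
with `ρ(I) ≤ 2λ₀`. Adding one coefficient to a sum at most halves its point concentration, so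
minimality forces `ρ(I) > λ₀` (for `I = ∅`, `ρ = 1 > λ₀`). Since the sums over disjoint index
sets are independent, `ρ(I) ρ(S \ I) ≤ ρ(S) ≤ λ₀ ν`, hence `ρ(S \ I) ≤ ν`, and the induction
continues on `S \ I` with the remaining `λ`'s.
-/

open Finset
open scoped Classical

/-- Probability of an event over uniformly random sign vectors in `{-1,1}^n`
(encoded as `Fin n → Bool`). -/
noncomputable def rprob {n : ℕ} (P : (Fin n → Bool) → Prop) : ℝ :=
  ((Finset.univ : Finset (Fin n → Bool)).filter P).card / 2 ^ n

/-- The Rademacher sum `∑_{i ∈ I} ξ_i a_i` for a sign vector `ε`. -/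
noncomputable def radSumOn {n d : ℕ} (a : Fin n → EuclideanSpace ℝ (Fin d))
    (I : Finset (Fin n)) (ε : Fin n → Bool) : EuclideanSpace ℝ (Fin d) :=
  ∑ i ∈ I, (if ε i then (1 : ℝ) else -1) • a i

/-- The full Rademacher sum `a_1 ξ_1 + ⋯ + a_n ξ_n`. -/
noncomputable def radSum {n d : ℕ} (a : Fin n → EuclideanSpace ℝ (Fin d))
    (ε : Fin n → Bool) : EuclideanSpace ℝ (Fin d) :=
  radSumOn a Finset.univ ε

/-- `ρ((a_i)_{i ∈ I}) = max_{x ∈ ℝ^d} Pr(∑_{i ∈ I} a_i ξ_i = x)`. -/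
noncomputable def rhoOn {n d : ℕ} (a : Fin n → EuclideanSpace ℝ (Fin d))
    (I : Finset (Fin n)) : ℝ :=
  sSup {p : ℝ | ∃ x, p = rprob (fun ε => radSumOn a I ε = x)}

section SignVectors

variable {n : ℕ}

lemma card_univ_signs : #(univ : Finset (Fin n → Bool)) = 2 ^ n := by simp

lemma rprob_mono {P Q : (Fin n → Bool) → Prop} (h : ∀ ε, P ε → Q ε) : rprob P ≤ rprob Q := by
  unfold rprob
  gcongr with ε
  exact h ε

lemma rprob_le_one (P : (Fin n → Bool) → Prop) : rprob P ≤ 1 := by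
  unfold rprob
  rw [div_le_one (by positivity)]
  exact_mod_cast (card_filter_le _ P).trans_eq card_univ_signs

lemma rprob_true : rprob (fun _ : Fin n → Bool => True) = 1 := by
  simp [rprob]

lemma rprob_eq_card_div (P : (Fin n → Bool) → Prop) [DecidablePred P] :
    rprob P = #(univ.filter P) / 2 ^ n := by
  unfold rprob
  congr

lemma rprob_apply_eq_true (i : Fin n) : rprob (fun ε => ε i = true) = 1 / 2 := by
  have hcard : #(univ.filter fun ε : Fin n → Bool => ε i = true) = 2 ^ (n - 1) := by
    convert Fintype.card_filter_piFinset_const_eq_of_mem (univ : Finset Bool) i (mem_univ true)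
      using 2
    · rw [Fintype.piFinset_univ]
    all_goals simp
  obtain ⟨k, rfl⟩ : ∃ k, n = k + 1 := Nat.exists_eq_add_one_of_ne_zero i.pos.ne'
  rw [rprob_eq_card_div, hcard]
  push_cast
  field_simp
  ring

lemma card_filter_and_mul_two_pow {P Q : (Fin n → Bool) → Prop} {I : Set (Fin n)}
    (hP : DependsOn P I) (hQ : DependsOn Q Iᶜ) :
    #(univ.filter fun ε => P ε ∧ Q ε) * 2 ^ n = #(univ.filter P) * #(univ.filter Q) := by
  have hP' : ∀ ε η, P (I.piecewise ε η) = P ε :=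
    fun ε η => hP fun i hi => Set.piecewise_eq_of_mem _ _ _ hi
  have hQ' : ∀ ε η, Q (I.piecewise ε η) = Q η :=
    fun ε η => hQ fun i hi => Set.piecewise_eq_of_notMem _ _ _ hi
  -- exchanging the coordinates outside `I` is an involution of pairs of sign vectors
  set swap := fun p : (Fin n → Bool) × (Fin n → Bool) =>
    (I.piecewise p.1 p.2, I.piecewise p.2 p.1)
  have hswap : Function.Involutive swap := by
    rintro ⟨ε, η⟩
    ext i <;> by_cases hi : i ∈ I <;> simp [swap, hi]
  rw [← card_univ_signs, ← card_product, ← card_product]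
  refine card_nbij' swap swap ?_ ?_ (fun p _ => hswap p) (fun p _ => hswap p)
  · rintro ⟨ε, η⟩
    simp [swap, hP', hQ']
  · rintro ⟨ε, η⟩
    simp [swap, hP', hQ']

lemma rprob_and_of_dependsOn {P Q : (Fin n → Bool) → Prop} {I : Set (Fin n)}
    (hP : DependsOn P I) (hQ : DependsOn Q Iᶜ) :
    rprob (fun ε => P ε ∧ Q ε) = rprob P * rprob Q := by
  have hcard := card_filter_and_mul_two_pow hP hQ
  rw [rprob_eq_card_div, rprob_eq_card_div P, rprob_eq_card_div Q]
  field_simp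
  exact_mod_cast hcard

end SignVectors

section PointConcentration

variable {n d : ℕ} (a : Fin n → EuclideanSpace ℝ (Fin d))

lemma dependsOn_radSumOn (I : Finset (Fin n)) : DependsOn (radSumOn a I) I :=
  fun _ _ h => sum_congr rfl fun i hi => by rw [h i hi]

lemma dependsOn_radSumOn_eq (I : Finset (Fin n)) (x : EuclideanSpace ℝ (Fin d)) :
    DependsOn (fun ε => radSumOn a I ε = x) I :=
  fun _ _ h => congrArg (· = x) (dependsOn_radSumOn a I h)

lemma finite_setOf_rprob_radSumOn_eq (I : Finset (Fin n)) :
    {p : ℝ | ∃ x, p = rprob (fun ε => radSumOn a I ε = x)}.Finite :=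
  (Set.finite_range fun s : Finset (Fin n → Bool) => (#s : ℝ) / 2 ^ n).subset
    fun _ ⟨_, hp⟩ => ⟨_, hp.symm⟩

lemma rprob_le_rhoOn (I : Finset (Fin n)) (x : EuclideanSpace ℝ (Fin d)) :
    rprob (fun ε => radSumOn a I ε = x) ≤ rhoOn a I :=
  le_csSup (finite_setOf_rprob_radSumOn_eq a I).bddAbove ⟨x, rfl⟩

lemma exists_rhoOn_eq_rprob (I : Finset (Fin n)) :
    ∃ x, rhoOn a I = rprob (fun ε => radSumOn a I ε = x) := by
  have hne : {p : ℝ | ∃ x, p = rprob (fun ε => radSumOn a I ε = x)}.Nonempty := ⟨_, 0, rfl⟩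
  exact hne.csSup_mem (finite_setOf_rprob_radSumOn_eq a I)

lemma rhoOn_empty : rhoOn a ∅ = 1 := by
  obtain ⟨x, hx⟩ := exists_rhoOn_eq_rprob a ∅
  refine hx.trans_le (rprob_le_one _) |>.antisymm ?_
  calc (1 : ℝ) = rprob fun ε => radSumOn a ∅ ε = 0 := by simp [radSumOn, rprob_true]
    _ ≤ rhoOn a ∅ := rprob_le_rhoOn a ∅ 0

lemma rhoOn_le_two_mul_rhoOn_insert {J : Finset (Fin n)} {i : Fin n} (hi : i ∉ J) :
    rhoOn a J ≤ 2 * rhoOn a (insert i J) := by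
  obtain ⟨x, hx⟩ := exists_rhoOn_eq_rprob a J
  have hcoord : DependsOn (fun ε : Fin n → Bool => ε i = true) (↑J)ᶜ :=
    fun _ _ h => congrArg (· = true) (h i hi)
  have hsub : ∀ ε, radSumOn a J ε = x ∧ ε i = true → radSumOn a (insert i J) ε = x + a i := by
    rintro ε ⟨hJ, hεi⟩
    rw [radSumOn, sum_insert hi, ← radSumOn, hJ, hεi, if_pos rfl, one_smul, add_comm]
  calc rhoOn a J = 2 * rprob (fun ε => radSumOn a J ε = x ∧ ε i = true) := by
        rw [rprob_and_of_dependsOn (dependsOn_radSumOn_eq a J x) hcoord, rprob_apply_eq_true, hx]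
        ring
    _ ≤ 2 * rhoOn a (insert i J) := by
        gcongr
        exact (rprob_mono hsub).trans (rprob_le_rhoOn a _ _)

lemma rhoOn_mul_rhoOn_le_rhoOn_union {I J : Finset (Fin n)} (h : Disjoint I J) :
    rhoOn a I * rhoOn a J ≤ rhoOn a (I ∪ J) := by
  obtain ⟨x, hx⟩ := exists_rhoOn_eq_rprob a I
  obtain ⟨y, hy⟩ := exists_rhoOn_eq_rprob a J
  have hJ : DependsOn (fun ε => radSumOn a J ε = y) (↑I)ᶜ :=
    (dependsOn_radSumOn_eq a J y).mono fun i hi => disjoint_right.1 h hi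
  have hsub : ∀ ε, radSumOn a I ε = x ∧ radSumOn a J ε = y → radSumOn a (I ∪ J) ε = x + y := by
    rintro ε ⟨hI, hJ⟩
    rw [radSumOn, sum_union h, ← radSumOn, ← radSumOn, hI, hJ]
  calc rhoOn a I * rhoOn a J = rprob (fun ε => radSumOn a I ε = x ∧ radSumOn a J ε = y) := by
        rw [rprob_and_of_dependsOn (dependsOn_radSumOn_eq a I x) hJ, hx, hy]
    _ ≤ rhoOn a (I ∪ J) := (rprob_mono hsub).trans (rprob_le_rhoOn a _ _)

end PointConcentration

section Partition

variable {n d : ℕ} (a : Fin n → EuclideanSpace ℝ (Fin d))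

lemma exists_subset_rhoOn_le_two_mul_rhoOn_sdiff_le {S : Finset (Fin n)} {μ ν : ℝ}
    (hμ₀ : 0 ≤ μ) (hμ : μ < 1 / 2) (hν₀ : 0 ≤ ν) (hν : ν ≤ 1) (hS : rhoOn a S ≤ μ * ν) :
    ∃ I ⊆ S, rhoOn a I ≤ 2 * μ ∧ rhoOn a (S \ I) ≤ ν := by
  obtain ⟨I, hIS, hImin⟩ :=
    exists_minimal_le_of_wellFoundedLT (fun I => rhoOn a I ≤ 2 * μ) S (hS.trans (by nlinarith))
  refine ⟨I, hIS, hImin.prop, ?_⟩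
  have hlow : μ < rhoOn a I := by
    obtain rfl | ⟨i, hi⟩ := I.eq_empty_or_nonempty
    · rw [rhoOn_empty]
      linarith
    · have herase : 2 * μ < rhoOn a (I.erase i) :=
        lt_of_not_ge (hImin.not_prop_of_lt (erase_ssubset hi))
      have hcont := rhoOn_le_two_mul_rhoOn_insert a (notMem_erase i I)
      rw [insert_erase hi] at hcont
      linarith
  by_contra! hhigh
  have hprod := rhoOn_mul_rhoOn_le_rhoOn_union a (disjoint_sdiff : Disjoint I (S \ I))
  rw [union_sdiff_of_subset hIS] at hprod
  linarith [mul_lt_mul'' hlow hhigh hμ₀ hν₀]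

lemma exists_partition_rhoOn_le (m : ℕ) (lam : Fin (m + 1) → ℝ) (S : Finset (Fin n))
    (h0 : ∀ j, 0 ≤ lam j) (h1 : ∀ j, lam j < 1 / 2) (hS : rhoOn a S ≤ ∏ j, lam j) :
    ∃ P : Fin n → Fin (m + 1), ∀ j, rhoOn a (S.filter fun i => P i = j) ≤ 2 * lam j := by
  induction m generalizing S with
  | zero =>
    refine ⟨fun _ => 0, fun j => ?_⟩
    rw [Fin.prod_univ_one] at hS
    rw [Fin.fin_one_eq_zero j, filter_true_of_mem fun _ _ => rfl]
    linarith [h0 0]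
  | succ m ih =>
    rw [Fin.prod_univ_succ] at hS
    have hν₀ : 0 ≤ ∏ j : Fin (m + 1), lam j.succ := prod_nonneg fun j _ => h0 _
    have hν : ∏ j : Fin (m + 1), lam j.succ ≤ 1 :=
      prod_le_one (fun j _ => h0 _) fun j _ => by linarith [h1 j.succ]
    obtain ⟨I, hIS, hI, hrest⟩ :=
      exists_subset_rhoOn_le_two_mul_rhoOn_sdiff_le a (h0 0) (h1 0) hν₀ hν hS
    obtain ⟨P, hP⟩ := ih (fun j => lam j.succ) (S \ I) (fun j => h0 _) (fun j => h1 _) hrest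
    refine ⟨fun i => if i ∈ I then 0 else (P i).succ, Fin.cases ?_ fun j => ?_⟩
    · convert hI using 2
      ext i
      by_cases hi : i ∈ I <;> simp [hi, @hIS i]
    · convert hP j using 2
      ext i
      by_cases hi : i ∈ I <;> simp [hi, (Fin.succ_ne_zero j).symm]

end Partition

theorem stmt3 {n d m : ℕ} (hm : 1 ≤ m) (a : Fin n → EuclideanSpace ℝ (Fin d))
    (lam : Fin m → ℝ) (h0 : ∀ j, 0 ≤ lam j) (h1 : ∀ j, lam j < 1 / 2)
    (hρ : rhoOn a Finset.univ ≤ ∏ j, lam j) :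
    ∃ P : Fin n → Fin m, ∀ j : Fin m,
      rhoOn a (Finset.univ.filter fun i => P i = j) ≤ 2 * lam j := by
  obtain ⟨m, rfl⟩ := Nat.exists_eq_add_of_le' hm
  exact exists_partition_rhoOn_le a m lam univ h0 h1 hρ
end

section
/- Let G be a bipartite graph with parts A and B, each carrying nonnegative vertex weights summing to 1, and suppose every vertex of A has weight at most ρ. Define w(G) = Σ_{a∼b} w(a)w(b). If every set of t distinct vertices in A has common neighbourhood of total weight at most q, then w(G) ≤ q^{1/t} + t·ρ. -/
open Finset
open scoped Classical

/-!
Let `d b` be the `A`-weight of the neighbourhood of `b`, so that `w(G) = ∑ b, w b * d b`.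
Picking `t` distinct neighbours of `b` one at a time, each pick removes weight at most `ρ`, so the
weight of injective `t`-tuples inside the neighbourhood is at least `(d b - tρ)₊ ^ t`. By Jensen,
`(w(G) - tρ)₊ ^ t ≤ ∑ b, w b * (d b - tρ)₊ ^ t`, and the right side is at most the total weight of
pairs (injective `t`-tuple, common neighbour), which grouped by tuple is at most
`q * (∑ a, w a) ^ t = q`.
-/

lemma injective_cons_and_mem_iff {A : Type*} {n : ℕ} (x : A) (y : Fin n → A) (s : Finset A) :
    (Function.Injective (Fin.cons x y : Fin (n + 1) → A) ∧
        ∀ i, (Fin.cons x y : Fin (n + 1) → A) i ∈ s) ↔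
      x ∈ s ∧ Function.Injective y ∧ ∀ i, y i ∈ s.erase x := by
  simp only [Fin.cons_injective_iff, Fin.forall_fin_succ, Fin.cons_zero, Fin.cons_succ, mem_erase,
    Set.mem_range, not_exists]
  grind

noncomputable def injTupleWeight {A : Type*} [Fintype A] (w : A → ℝ) (n : ℕ) (s : Finset A) : ℝ :=
  ∑ f : Fin n → A with Function.Injective f ∧ ∀ i, f i ∈ s, ∏ i, w (f i)

section injTupleWeight

variable {A : Type*} [Fintype A] (w : A → ℝ)

@[simp]
lemma injTupleWeight_zero (s : Finset A) : injTupleWeight w 0 s = 1 := by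
  simp [injTupleWeight, Function.injective_of_subsingleton]

lemma injTupleWeight_succ (n : ℕ) (s : Finset A) :
    injTupleWeight w (n + 1) s = ∑ a ∈ s, w a * injTupleWeight w n (s.erase a) := by
  have hcons (x : A) (y : Fin n → A) : Fin.consEquiv (fun _ => A) (x, y) = Fin.cons x y := rfl
  rw [injTupleWeight, sum_filter, ← (Fin.consEquiv fun _ => A).sum_comp, Fintype.sum_prod_type]
  simp only [hcons]
  simp only [injective_cons_and_mem_iff, Fin.prod_univ_succ, Fin.cons_zero, Fin.cons_succ, ite_and,
    sum_ite_irrel, sum_const_zero, injTupleWeight, mul_sum, sum_filter, mul_ite, mul_zero]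
  rw [← sum_filter, filter_mem_eq_inter, univ_inter]

lemma pow_max_sub_le_injTupleWeight {ρ : ℝ} (hw : ∀ a, 0 ≤ w a) (hρ : ∀ a, w a ≤ ρ) (hρ0 : 0 ≤ ρ)
    (n : ℕ) (s : Finset A) : max (∑ a ∈ s, w a - n * ρ) 0 ^ n ≤ injTupleWeight w n s := by
  induction n generalizing s with
  | zero => simp
  | succ n ih =>
    set m := max (∑ a ∈ s, w a - (n + 1 : ℕ) * ρ) 0
    have hm : m ≤ ∑ a ∈ s, w a :=
      max_le (sub_le_self _ (by positivity)) (sum_nonneg fun a _ => hw a)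
    have hm_erase (a : A) (ha : a ∈ s) : m ≤ max (∑ b ∈ s.erase a, w b - n * ρ) 0 := by
      refine max_le_max_right _ ?_
      rw [sum_erase_eq_sub ha]
      push_cast
      linarith [hρ a]
    calc m ^ (n + 1) = m ^ n * m := pow_succ m n
      _ ≤ m ^ n * ∑ a ∈ s, w a := by gcongr
      _ = ∑ a ∈ s, w a * m ^ n := by rw [mul_sum]; simp only [mul_comm]
      _ ≤ ∑ a ∈ s, w a * injTupleWeight w n (s.erase a) := by
        refine sum_le_sum fun a ha => mul_le_mul_of_nonneg_left ?_ (hw a)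
        exact (pow_le_pow_left₀ (le_max_right _ _) (hm_erase a ha) n).trans (ih _)
      _ = injTupleWeight w (n + 1) s := (injTupleWeight_succ w n s).symm

end injTupleWeight

section Bipartite

variable {A B : Type*} [Fintype A] [Fintype B] (Adj : A → B → Prop) (wA : A → ℝ) (wB : B → ℝ)

lemma sum_adj_mul_eq_sum_mul_sum_adj :
    ∑ a : A, ∑ b ∈ univ.filter (fun b => Adj a b), wA a * wB b =
      ∑ b : B, wB b * ∑ a ∈ univ.filter (fun a => Adj a b), wA a := by
  simp only [sum_filter, mul_sum, mul_ite, mul_zero]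
  rw [sum_comm]
  simp only [mul_comm]

lemma sum_mul_injTupleWeight_eq (n : ℕ) :
    ∑ b : B, wB b * injTupleWeight wA n (univ.filter fun a => Adj a b) =
      ∑ f : Fin n → A with Function.Injective f,
        (∏ i, wA (f i)) * ∑ b ∈ univ.filter (fun b => ∀ i, Adj (f i) b), wB b := by
  simp only [injTupleWeight, sum_filter, mul_sum, mem_filter, mem_univ, true_and]
  rw [sum_comm]
  refine sum_congr rfl fun f _ => ?_
  split_ifs with hf <;> simp [hf, mul_comm]

variable {Adj wA} {q : ℝ}

lemma sum_mul_injTupleWeight_le {n : ℕ} (hwA0 : ∀ a, 0 ≤ wA a) (hwA1 : ∑ a, wA a = 1)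
    (hq : 0 ≤ q)
    (hcn : ∀ T : Finset A, T.card = n → ∑ b ∈ univ.filter (fun b => ∀ a ∈ T, Adj a b), wB b ≤ q) :
    ∑ b : B, wB b * injTupleWeight wA n (univ.filter fun a => Adj a b) ≤ q := by
  have hcn_tuple (f : Fin n → A) (hf : Function.Injective f) :
      ∑ b ∈ univ.filter (fun b => ∀ i, Adj (f i) b), wB b ≤ q := by
    simpa using hcn (univ.image f) (by simp [card_image_of_injective _ hf])
  rw [sum_mul_injTupleWeight_eq]
  calc ∑ f : Fin n → A with Function.Injective f,
          (∏ i, wA (f i)) * ∑ b ∈ univ.filter (fun b => ∀ i, Adj (f i) b), wB b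
      ≤ ∑ f : Fin n → A with Function.Injective f, (∏ i, wA (f i)) * q := by
        refine sum_le_sum fun f hf => mul_le_mul_of_nonneg_left ?_ (prod_nonneg fun i _ => hwA0 _)
        exact hcn_tuple f (mem_filter.mp hf).2
    _ ≤ ∑ f : Fin n → A, (∏ i, wA (f i)) * q :=
        sum_le_sum_of_subset_of_nonneg (filter_subset _ _) fun f _ _ =>
          mul_nonneg (prod_nonneg fun i _ => hwA0 _) hq
    _ = q := by rw [← sum_mul, ← Fintype.sum_pow, hwA1, one_pow, one_mul]

lemma pow_max_weight_sub_le {n : ℕ} {ρ : ℝ} (hwA0 : ∀ a, 0 ≤ wA a) (hwA1 : ∑ a, wA a = 1)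
    (hwB0 : ∀ b, 0 ≤ wB b) (hwB1 : ∑ b, wB b = 1) (hρ : ∀ a, wA a ≤ ρ) (hρ0 : 0 ≤ ρ) (hq : 0 ≤ q)
    (hcn : ∀ T : Finset A, T.card = n → ∑ b ∈ univ.filter (fun b => ∀ a ∈ T, Adj a b), wB b ≤ q) :
    max (∑ b, wB b * ∑ a ∈ univ.filter (fun a => Adj a b), wA a - n * ρ) 0 ^ n ≤ q := by
  set d : B → ℝ := fun b => ∑ a ∈ univ.filter (fun a => Adj a b), wA a
  set y : B → ℝ := fun b => max (d b - n * ρ) 0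
  have h_avg : ∑ b, wB b * d b - n * ρ ≤ ∑ b, wB b * y b := calc
    ∑ b, wB b * d b - n * ρ = ∑ b, wB b * (d b - n * ρ) := by
      simp only [mul_sub, sum_sub_distrib, ← sum_mul, hwB1, one_mul]
    _ ≤ ∑ b, wB b * y b :=
      sum_le_sum fun b _ => mul_le_mul_of_nonneg_left (le_max_left _ _) (hwB0 b)
  calc max (∑ b, wB b * d b - n * ρ) 0 ^ n
      ≤ (∑ b, wB b * y b) ^ n :=
        pow_le_pow_left₀ (le_max_right _ _) (max_le h_avg (sum_nonneg fun b _ =>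
          mul_nonneg (hwB0 b) (le_max_right _ _))) n
    _ ≤ ∑ b, wB b * y b ^ n :=
        Real.pow_arith_mean_le_arith_mean_pow _ _ _ (fun b _ => hwB0 b) hwB1
          (fun b _ => le_max_right _ _) n
    _ ≤ ∑ b, wB b * injTupleWeight wA n (univ.filter fun a => Adj a b) :=
        sum_le_sum fun b _ => mul_le_mul_of_nonneg_left
          (pow_max_sub_le_injTupleWeight wA hwA0 hρ hρ0 n _) (hwB0 b)
    _ ≤ q := sum_mul_injTupleWeight_le wB hwA0 hwA1 hq hcn

end Bipartite

theorem stmt5 {A B : Type*} [Fintype A] [Fintype B] (Adj : A → B → Prop)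
    (wA : A → ℝ) (wB : B → ℝ)
    (hwA0 : ∀ a, 0 ≤ wA a) (hwA1 : ∑ a, wA a = 1)
    (hwB0 : ∀ b, 0 ≤ wB b) (hwB1 : ∑ b, wB b = 1)
    (t : ℕ) (ht : 1 ≤ t) (q ρ : ℝ) (hq : 0 ≤ q)
    (hρ : ∀ a, wA a ≤ ρ)
    (hcn : ∀ T : Finset A, T.card = t →
      ∑ b ∈ Finset.univ.filter (fun b => ∀ a ∈ T, Adj a b), wB b ≤ q) :
    ∑ a : A, ∑ b ∈ Finset.univ.filter (fun b => Adj a b), wA a * wB b ≤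
      q ^ ((1 : ℝ) / t) + t * ρ := by
  obtain ⟨a₀, -⟩ := nonempty_of_sum_ne_zero (hwA1 ▸ one_ne_zero)
  have hρ0 : 0 ≤ ρ := (hwA0 a₀).trans (hρ a₀)
  rw [sum_adj_mul_eq_sum_mul_sum_adj]
  set x := ∑ b, wB b * ∑ a ∈ univ.filter (fun a => Adj a b), wA a
  have hroot : max (x - t * ρ) 0 ≤ q ^ ((1 : ℝ) / t) := by
    rw [one_div, Real.le_rpow_inv_iff_of_pos (le_max_right _ _) hq (by exact_mod_cast ht),
      Real.rpow_natCast]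
    exact pow_max_weight_sub_le wB hwA0 hwA1 hwB0 hwB1 hρ hρ0 hq hcn
  linarith [le_max_left (x - t * ρ) 0]
end

section
/- There is no finite set of points Z = A_1 + A_2 + ... + A_{d+1} ⊆ R^d, with each |A_i| = 2, that is in convex position. -/
/-!
Write `A i = {a i, b i}`. The `d + 1` vectors `b i - a i` in `ℝ^d` satisfy a nontrivial relation
`∑ g i • (b i - a i) = 0`. Let `q ∈ Z` be the point choosing `b i` exactly where `g i < 0`.
Switching the choice at `i` moves `q` by `u i = ±(b i - a i)`, with the sign making
`|g i| • u i = g i • (b i - a i)`. Hence `∑ |g i| • u i = 0`: the point `q` is the barycentre,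
with weights `|g i|`, of its neighbours `q + u i ∈ Z \ {q}`.
-/

open Finset

/-- The Minkowski sum `A 0 + A 1 + ⋯ + A (k-1)` of a family of finite sets. -/
def minkSum {d k : ℕ} (A : Fin k → Finset (EuclideanSpace ℝ (Fin d))) :
    Set (EuclideanSpace ℝ (Fin d)) :=
  {x | ∃ f : Fin k → EuclideanSpace ℝ (Fin d), (∀ i, f i ∈ A i) ∧ x = ∑ i, f i}

section

variable {𝕜 E ι : Type*} [Field 𝕜] [LinearOrder 𝕜] [IsStrictOrderedRing 𝕜]
  [AddCommGroup E] [Module 𝕜 E] [Fintype ι]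

theorem mem_convexHull_range_add_of_sum_smul_eq_zero {w : ι → 𝕜} (hw₀ : ∀ i, 0 ≤ w i)
    (hw : 0 < ∑ i, w i) {u : ι → E} (hu : ∑ i, w i • u i = 0) (q : E) :
    q ∈ convexHull 𝕜 (Set.range fun i => q + u i) := by
  have hcm : univ.centerMass w (fun i => q + u i) = q := by
    rw [centerMass, sum_congr rfl fun i _ => smul_add (w i) q (u i), sum_add_distrib, hu,
      add_zero, ← sum_smul, inv_smul_smul₀ hw.ne']
  have := univ.centerMass_mem_convexHull (fun i _ => hw₀ i) hw
    fun i _ => Set.mem_range_self (f := fun i => q + u i) i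
  rwa [hcm] at this

variable [DecidableEq ι]

def cubePoint (a b : ι → E) (S : Finset ι) : E := ∑ i, S.piecewise b a i

theorem cubePoint_symmDiff_singleton (a b : ι → E) (S : Finset ι) (j : ι) :
    cubePoint a b (symmDiff S {j}) =
      cubePoint a b S + if j ∈ S then a j - b j else b j - a j := by
  rw [← sub_eq_iff_eq_add', cubePoint, cubePoint, ← sum_sub_distrib,
    Fintype.sum_eq_single j fun i hi => by simp [piecewise, mem_symmDiff, hi]]
  by_cases h : j ∈ S <;> simp [piecewise, mem_symmDiff, h]

theorem exists_cubePoint_mem_convexHull_of_not_linearIndependent {a b : ι → E}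
    (hab : ∀ i, a i ≠ b i) (hdep : ¬ LinearIndependent 𝕜 (b - a)) :
    ∃ S, cubePoint a b S ∈ convexHull 𝕜 (Set.range (cubePoint a b) \ {cubePoint a b S}) := by
  obtain ⟨g, hg, i₀, hi₀⟩ := Fintype.not_linearIndependent_iff.mp hdep
  set N := univ.filter (g · < 0)
  set u : ι → E := fun i => if i ∈ N then a i - b i else b i - a i
  have hu : ∑ i, |g i| • u i = 0 := by
    rw [← hg]
    refine sum_congr rfl fun i _ => ?_
    rcases lt_or_ge (g i) 0 with h | h
    · simp [u, N, h, abs_of_neg h, ← smul_neg]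
    · simp [u, N, h.not_gt, abs_of_nonneg h]
  have hw : 0 < ∑ i, |g i| :=
    sum_pos' (fun i _ => abs_nonneg _) ⟨i₀, mem_univ _, abs_pos.mpr hi₀⟩
  refine ⟨N, convexHull_mono ?_
    (mem_convexHull_range_add_of_sum_smul_eq_zero (fun i => abs_nonneg _) hw hu _)⟩
  rintro _ ⟨i, rfl⟩
  refine ⟨⟨symmDiff N {i}, cubePoint_symmDiff_singleton a b N i⟩, ?_⟩
  have hu_ne : u i ≠ 0 := by
    by_cases h : i ∈ N <;> simp [u, h, sub_eq_zero, hab i, (hab i).symm]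
  simpa using hu_ne

end

theorem cubePoint_mem_minkSum {d k : ℕ} {A : Fin k → Finset (EuclideanSpace ℝ (Fin d))}
    {a b : Fin k → EuclideanSpace ℝ (Fin d)} (hA : ∀ i, A i = {a i, b i}) (S : Finset (Fin k)) :
    cubePoint a b S ∈ minkSum A :=
  ⟨S.piecewise b a, fun i => by by_cases h : i ∈ S <;> simp [hA, h], rfl⟩

theorem stmt8 (d : ℕ) (A : Fin (d + 1) → Finset (EuclideanSpace ℝ (Fin d)))
    (hA : ∀ i, (A i).card = 2) :
    ¬ (∀ z ∈ minkSum A, z ∉ convexHull ℝ (minkSum A \ {z})) := by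
  intro hconv
  choose a b hab hA using fun i => card_eq_two.mp (hA i)
  have hdep : ¬ LinearIndependent ℝ (b - a) := fun h => by
    simpa using h.fintype_card_le_finrank
  obtain ⟨S, hS⟩ := exists_cubePoint_mem_convexHull_of_not_linearIndependent hab hdep
  have hsub : Set.range (cubePoint a b) ⊆ minkSum A := by
    rintro _ ⟨T, rfl⟩
    exact cubePoint_mem_minkSum hA T
  exact hconv _ (hsub ⟨S, rfl⟩) (convexHull_mono (Set.sdiff_subset_sdiff_left hsub) hS)
end

section
/- Let H be an m-partite m-uniform hypergraph on vertex sets V_1,...,V_m that contains no copy of K^{(m)}_{2,...,2} (the complete m-partite m-uniform hypergraph with two vertices in each part). Suppose each part carries nonnegative vertex weights summing to 1, with each individual weight at most λ ≤ 1. Then the total edge weight w(H) = Σ_{{v_1,...,v_m}∈E(H)} w(v_1)···w(v_m) satisfies w(H) ≤ C_m · λ^{1/2^{m−1}} for some constant C_m depending only on m. -/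
/-!
Induction on `m`. Write an edge as `(a, e)` with `a ∈ V₁`. Cauchy–Schwarz against the product
weight on `V₂ × ⋯ × Vₘ` bounds `w(H)²` by `∑_{a,b} w(a) w(b) w(L_a ∩ L_b)`, where `L_a` is the
link of `a`. The diagonal contributes at most `∑ w(a)² ≤ λ`. For `a ≠ b` the common link
`L_a ∩ L_b` contains no `K^{(m-1)}_{2,…,2}`, since such a copy together with `a, b` is a
`K^{(m)}_{2,…,2}` in `H`; by induction its weight is `O(λ^{1/2^{m-2}})`, hence so is `w(H)²`.
For `m = 1` a hypergraph without `K^{(1)}_{2}` has at most one edge.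
-/

open Finset
open scoped Classical

theorem nonneg_of_sum_eq_one_of_le {α : Type*} [Fintype α] {w : α → ℝ} {lam : ℝ}
    (hw0 : ∀ a, 0 ≤ w a) (hw1 : ∑ a, w a = 1) (hwlam : ∀ a, w a ≤ lam) : 0 ≤ lam := by
  obtain ⟨a⟩ : Nonempty α := by
    by_contra h
    simp [not_nonempty_iff.mp h] at hw1
  exact (hw0 a).trans (hwlam a)

theorem sum_sum_mul_mul_le_add {α : Type*} [Fintype α] {p : α → ℝ} {L : α → α → ℝ}
    {lam ε : ℝ} (hp0 : ∀ a, 0 ≤ p a) (hp1 : ∑ a, p a = 1) (hplam : ∀ a, p a ≤ lam)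
    (hε : 0 ≤ ε) (hdiag : ∀ a, L a a ≤ 1) (hoff : ∀ a b, a ≠ b → L a b ≤ ε) :
    ∑ a, ∑ b, p a * p b * L a b ≤ lam + ε := by
  have hL : ∀ a b, L a b ≤ (if a = b then 1 else 0) + ε := by
    intro a b
    by_cases hab : a = b
    · subst hab
      simpa using (hdiag a).trans (le_add_of_nonneg_right hε)
    · simpa [hab] using hoff a b hab
  calc ∑ a, ∑ b, p a * p b * L a b
      ≤ ∑ a, ∑ b, p a * p b * ((if a = b then 1 else 0) + ε) :=
        sum_le_sum fun a _ => sum_le_sum fun b _ =>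
          mul_le_mul_of_nonneg_left (hL a b) (mul_nonneg (hp0 a) (hp0 b))
    _ = ∑ a, p a * p a + ε := by
        simp [mul_add, sum_add_distrib, ← mul_sum, ← sum_mul, hp1]
    _ ≤ ∑ a, lam * p a + ε := by
        gcongr with a
        exacts [hp0 a, hplam a]
    _ = lam + ε := by rw [← mul_sum, hp1, mul_one]

theorem sq_sum_sum_ite_le {α β : Type*} [Fintype α] [Fintype β] (R : α → β → Prop)
    (p : α → ℝ) {q : β → ℝ} (hq0 : ∀ y, 0 ≤ q y) (hq1 : ∑ y, q y = 1) :
    (∑ a, ∑ y, if R a y then p a * q y else 0) ^ 2 ≤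
      ∑ a, ∑ b, p a * p b * ∑ y, if R a y ∧ R b y then q y else 0 := by
  set d : β → ℝ := fun y => ∑ a, if R a y then p a else 0
  have hS : (∑ a, ∑ y, if R a y then p a * q y else 0) = ∑ y, q y * d y := by
    rw [sum_comm]
    refine sum_congr rfl fun y _ => ?_
    rw [mul_sum]
    refine sum_congr rfl fun a _ => ?_
    split_ifs <;> ring
  have hCS : (∑ y, q y * d y) ^ 2 ≤ ∑ y, q y * d y ^ 2 := by
    simpa [hq1] using sum_sq_le_sum_mul_sum_of_sq_le_mul univ (r := fun y => q y * d y)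
      (fun y _ => hq0 y) (fun y _ => mul_nonneg (hq0 y) (sq_nonneg (d y)))
      (fun y _ => le_of_eq (by ring))
  have hexpand : ∀ y, q y * d y ^ 2 =
      ∑ a, ∑ b, if R a y ∧ R b y then p a * p b * q y else 0 := by
    intro y
    rw [sq, sum_mul_sum, mul_sum]
    refine sum_congr rfl fun a _ => ?_
    rw [mul_sum]
    refine sum_congr rfl fun b _ => ?_
    rw [ite_zero_mul_ite_zero, mul_ite, mul_zero, mul_comm]
  rw [hS]
  refine hCS.trans (le_of_eq ?_)
  simp_rw [hexpand, mul_sum, mul_ite, mul_zero]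
  rw [sum_comm]
  exact sum_congr rfl fun a _ => sum_comm

theorem sq_sum_sum_ite_le_of_commonNeighbor_le {α β : Type*} [Fintype α] [Fintype β]
    (R : α → β → Prop) {p : α → ℝ} {q : β → ℝ} {lam ε : ℝ}
    (hp0 : ∀ a, 0 ≤ p a) (hp1 : ∑ a, p a = 1) (hplam : ∀ a, p a ≤ lam)
    (hq0 : ∀ y, 0 ≤ q y) (hq1 : ∑ y, q y = 1) (hε : 0 ≤ ε)
    (hcommon : ∀ a b, a ≠ b → ∑ y, (if R a y ∧ R b y then q y else 0) ≤ ε) :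
    (∑ a, ∑ y, if R a y then p a * q y else 0) ^ 2 ≤ lam + ε :=
  (sq_sum_sum_ite_le R p hq0 hq1).trans <| sum_sum_mul_mul_le_add hp0 hp1 hplam hε
    (fun a => (sum_le_sum fun y _ => by split_ifs <;> simp [hq0 y]).trans hq1.le) hcommon

universe u

section Hypergraph

variable {m : ℕ} {V : Fin m → Type u}

/-- `H` contains a copy of `K^{(m)}_{2,…,2}`. -/
def ContainsBox (H : (∀ i, V i) → Prop) : Prop :=
  ∃ x y : ∀ i, V i, (∀ i, x i ≠ y i) ∧ ∀ z : ∀ i, V i, (∀ i, z i = x i ∨ z i = y i) → H z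

noncomputable def edgeWeight [∀ i, Fintype (V i)] (w : ∀ i, V i → ℝ) (H : (∀ i, V i) → Prop) : ℝ :=
  ∑ e, if H e then ∏ i, w i (e i) else 0

theorem sum_prod_eq_one [∀ i, Fintype (V i)] {w : ∀ i, V i → ℝ} (hw1 : ∀ i, ∑ v, w i v = 1) :
    ∑ e : ∀ i, V i, ∏ i, w i (e i) = 1 := by
  simp [← Fintype.prod_sum, hw1]

end Hypergraph

theorem eq_of_not_containsBox_fin_one {V : Fin 1 → Type u} {H : (∀ i, V i) → Prop}
    (hH : ¬ ContainsBox H) {e f : ∀ i, V i} (he : H e) (hf : H f) : e = f := by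
  have hext : ∀ g g' : ∀ i, V i, g 0 = g' 0 → g = g' :=
    fun g g' h => funext fun i => Fin.fin_one_eq_zero i ▸ h
  by_contra hne
  refine hH ⟨e, f, fun i h => hne (hext e f (Fin.fin_one_eq_zero i ▸ h)), fun z hz => ?_⟩
  rcases hz 0 with h | h
  · rwa [hext z e h]
  · rwa [hext z f h]

theorem edgeWeight_le_of_not_containsBox_fin_one {V : Fin 1 → Type u} [∀ i, Fintype (V i)]
    {H : (∀ i, V i) → Prop} {w : ∀ i, V i → ℝ} {lam : ℝ} (hlam : 0 ≤ lam)
    (hwlam : ∀ i v, w i v ≤ lam) (hH : ¬ ContainsBox H) : edgeWeight w H ≤ lam := by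
  have hcard : #(univ.filter H) ≤ 1 := card_le_one.mpr fun e he f hf =>
    eq_of_not_containsBox_fin_one hH (mem_filter.mp he).2 (mem_filter.mp hf).2
  calc edgeWeight w H = ∑ e ∈ univ.filter H, w 0 (e 0) := by
        simp [edgeWeight, sum_filter]
    _ ≤ #(univ.filter H) • lam := sum_le_card_nsmul _ _ _ fun e _ => hwlam 0 (e 0)
    _ ≤ 1 • lam := nsmul_le_nsmul_left hlam hcard
    _ = lam := one_smul _ _

section Link

variable {n : ℕ} {V : Fin (n + 1) → Type u}

def commonLink (H : (∀ i, V i) → Prop) (a b : V 0) (e : ∀ i : Fin n, V i.succ) : Prop :=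
  H (Fin.cons a e) ∧ H (Fin.cons b e)

theorem not_containsBox_commonLink {H : (∀ i, V i) → Prop} (hH : ¬ ContainsBox H)
    {a b : V 0} (hab : a ≠ b) : ¬ ContainsBox (commonLink H a b) := by
  rintro ⟨x, y, hxy, hbox⟩
  refine hH ⟨Fin.cons a x, Fin.cons b y, Fin.cases (by simpa using hab) (by simpa using hxy),
    fun z hz => ?_⟩
  have hlink := hbox (Fin.tail z) fun i => by simpa [Fin.tail] using hz i.succ
  rw [← Fin.cons_self_tail z]
  rcases hz 0 with h | h
  · simpa [h] using hlink.1
  · simpa [h] using hlink.2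

theorem edgeWeight_eq_sum_sum [∀ i, Fintype (V i)] (w : ∀ i, V i → ℝ) (H : (∀ i, V i) → Prop) :
    edgeWeight w H = ∑ a, ∑ e : ∀ i : Fin n, V i.succ,
      if H (Fin.cons a e) then w 0 a * ∏ i, w i.succ (e i) else 0 := by
  rw [edgeWeight, ← (Fin.consEquiv V).sum_comp, Fintype.sum_prod_type]
  simp [Fin.consEquiv, Fin.prod_univ_succ]

end Link

theorem exists_edgeWeight_le_of_not_containsBox (n : ℕ) :
    ∃ C : ℝ, 0 < C ∧ ∀ (V : Fin (n + 1) → Type u) [∀ i, Fintype (V i)]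
      (H : (∀ i, V i) → Prop) (w : ∀ i, V i → ℝ) (lam : ℝ),
      lam ≤ 1 → (∀ i v, 0 ≤ w i v) → (∀ i, ∑ v, w i v = 1) → (∀ i v, w i v ≤ lam) →
      ¬ ContainsBox H → edgeWeight w H ≤ C * lam ^ ((1 : ℝ) / 2 ^ n) := by
  induction n with
  | zero =>
    refine ⟨1, one_pos, fun V _ H w lam _ hw0 hw1 hwlam hH => ?_⟩
    simpa using edgeWeight_le_of_not_containsBox_fin_one
      (nonneg_of_sum_eq_one_of_le (hw0 0) (hw1 0) (hwlam 0)) hwlam hH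
  | succ n ih =>
    obtain ⟨C, hC, hbound⟩ := ih
    refine ⟨√(C + 1), by positivity, fun V _ H w lam hlam1 hw0 hw1 hwlam hH => ?_⟩
    have hlam : 0 ≤ lam := nonneg_of_sum_eq_one_of_le (hw0 0) (hw1 0) (hwlam 0)
    set μ := lam ^ ((1 : ℝ) / 2 ^ n)
    have hCμ : 0 ≤ C * μ := mul_nonneg hC.le (Real.rpow_nonneg hlam _)
    have hsq : edgeWeight w H ^ 2 ≤ lam + C * μ := by
      rw [edgeWeight_eq_sum_sum]
      refine sq_sum_sum_ite_le_of_commonNeighbor_le (fun a e => H (Fin.cons a e))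
        (hw0 0) (hw1 0) (hwlam 0) (fun e => prod_nonneg fun i _ => hw0 _ _)
        (sum_prod_eq_one fun i => hw1 _) hCμ fun a b hab => ?_
      simpa only [edgeWeight, commonLink] using hbound _ (commonLink H a b) (fun i => w i.succ)
        lam hlam1 (fun _ _ => hw0 _ _) (fun _ => hw1 _) (fun _ _ => hwlam _ _)
        (not_containsBox_commonLink hH hab)
    have hlamμ : lam ≤ μ := Real.self_le_rpow_of_le_one hlam hlam1
      ((div_le_one (by positivity)).mpr (one_le_pow₀ one_le_two))
    have hsqrtμ : √μ = lam ^ ((1 : ℝ) / 2 ^ (n + 1)) := by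
      rw [Real.sqrt_eq_rpow, ← Real.rpow_mul hlam, pow_succ, one_div_mul_one_div]
    calc edgeWeight w H ≤ √((C + 1) * μ) :=
          (le_abs_self _).trans (Real.abs_le_sqrt (by nlinarith))
      _ = √(C + 1) * lam ^ ((1 : ℝ) / 2 ^ (n + 1)) := by
        rw [Real.sqrt_mul (by linarith), hsqrtμ]

theorem stmt13 (m : ℕ) (hm : 1 ≤ m) :
    ∃ C : ℝ, 0 < C ∧
      ∀ (V : Fin m → Type) [∀ i, Fintype (V i)]
        (H : (∀ i, V i) → Prop) (w : ∀ i, V i → ℝ) (lam : ℝ),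
        lam ≤ 1 →
        (∀ i v, 0 ≤ w i v) →
        (∀ i, ∑ v, w i v = 1) →
        (∀ i v, w i v ≤ lam) →
        (¬ ∃ x y : ∀ i, V i, (∀ i, x i ≠ y i) ∧
            ∀ z : ∀ i, V i, (∀ i, z i = x i ∨ z i = y i) → H z) →
        (∑ e : ∀ i, V i, if H e then ∏ i, w i (e i) else 0) ≤
          C * lam ^ ((1 : ℝ) / 2 ^ (m - 1)) := by
  obtain ⟨n, rfl⟩ : ∃ n, m = n + 1 := ⟨m - 1, by omega⟩
  obtain ⟨C, hC, hbound⟩ := exists_edgeWeight_le_of_not_containsBox n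
  refine ⟨C, hC, fun V _ H w lam hlam1 hw0 hw1 hwlam hH => ?_⟩
  rw [Nat.add_sub_cancel]
  exact hbound V H w lam hlam1 hw0 hw1 hwlam hH
end

section
/- Let S ⊆ R^d and suppose that for some N, for all nonzero b_1,...,b_N ∈ R^d and all x ∈ R^d we have Pr(b_1ξ_1+...+b_Nξ_N ∈ S − x) < 1 (ξ_i i.i.d. Rademacher). Let a_1,...,a_n be nonzero vectors with n ≥ N, let X = a_1ξ_1+...+a_nξ_n, let G be the set of sign vectors ξ ∈ {−1,1}^n with X(ξ) ∈ S, and let G' be the set of sign vectors ξ such that flipping some coordinate ξ_i with i ≤ N changes whether X ∈ S. Then |G| ≤ 2^N · |G'|. -/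
open Finset
open scoped Classical

/-! If `X(ε) ∈ S`, the hypothesis applied to `a_1, …, a_N` and the translate
`x = ∑_{i > N} a_i ε_i` yields a sign vector `δ`, agreeing with `ε` beyond `N`, with `X(δ) ∉ S`.
Flipping the first `N` signs of `ε` one at a time towards `δ` crosses the boundary of
`{X ∈ S}` at some `ε' ∈ G'` that still agrees with `ε` beyond `N`; hence each element of `G'`
is reached from at most `2^N` elements of `G`. -/

section SignVectors

variable {ι : Type*} [DecidableEq ι]

theorem exists_flip_of_eq_off {P : (ι → Bool) → Prop} (I : Finset ι) :
    ∀ {ε δ : ι → Bool}, (∀ i ∉ I, δ i = ε i) → P ε → ¬ P δ →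
      ∃ ε', (∀ i ∉ I, ε' i = ε i) ∧
        ∃ i ∈ I, P ε' ∧ ¬ P (Function.update ε' i (!ε' i)) := by
  induction I using Finset.induction_on with
  | empty =>
    intro ε δ hδ hε hδP
    obtain rfl : δ = ε := funext fun i => hδ i (notMem_empty i)
    exact absurd hε hδP
  | insert j J hjJ ih =>
    intro ε δ hδ hε hδP
    by_cases hj : δ j = ε j
    · have hδJ : ∀ i ∉ J, δ i = ε i := fun i hi => by
        by_cases hij : i = j
        · exact hij ▸ hj
        · exact hδ i (by simp [hij, hi])
      obtain ⟨ε', hε', i, hi, h⟩ := ih hδJ hε hδP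
      exact ⟨ε', fun k hk => hε' k fun hkJ => hk (mem_insert_of_mem hkJ), i,
        mem_insert_of_mem hi, h⟩
    by_cases hflip : P (Function.update ε j (!ε j))
    · -- walk on from the neighbour of `ε` in direction `j`, which still satisfies `P`
      have hδJ : ∀ i ∉ J, δ i = Function.update ε j (!ε j) i := fun i hi => by
        by_cases hij : i = j
        · subst hij; simpa using Bool.eq_not_iff.2 hj
        · simpa [hij] using hδ i (by simp [hij, hi])
      obtain ⟨ε', hε', i, hi, h⟩ := ih hδJ hflip hδP
      refine ⟨ε', fun k hk => ?_, i, mem_insert_of_mem hi, h⟩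
      have hkj : k ≠ j := fun h => hk (h ▸ mem_insert_self j J)
      simpa [hkj] using hε' k fun hkJ => hk (mem_insert_of_mem hkJ)
    · exact ⟨ε, fun _ _ => rfl, j, mem_insert_self j J, hε, hflip⟩

theorem card_filter_eq_off_le [Fintype ι] {β : Type*} [Fintype β] (I : Finset ι) (c : ι → β) :
    #{ε : ι → β | ∀ i ∉ I, ε i = c i} ≤ Fintype.card β ^ #I := by
  have hinj : Set.InjOn (fun (ε : ι → β) (i : I) => ε i) {ε | ∀ i ∉ I, ε i = c i} := by
    intro ε₁ h₁ ε₂ h₂ heq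
    funext i
    by_cases hi : i ∈ I
    · exact congrFun heq ⟨i, hi⟩
    · rw [h₁ i hi, h₂ i hi]
  calc #{ε : ι → β | ∀ i ∉ I, ε i = c i}
      ≤ #(univ : Finset (I → β)) :=
        card_le_card_of_injOn _ (fun _ _ => mem_coe.2 (mem_univ _)) (by simpa using hinj)
    _ = Fintype.card β ^ #I := by simp

theorem card_filter_le_two_pow_mul_card_boundary [Fintype ι] (P : (ι → Bool) → Prop)
    (I : Finset ι) (hP : ∀ ε, P ε → ∃ δ, (∀ i ∉ I, δ i = ε i) ∧ ¬ P δ) :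
    #{ε | P ε} ≤ 2 ^ #I * #{ε | ∃ i ∈ I, ¬ (P ε ↔ P (Function.update ε i (!ε i)))} := by
  have hboundary : ∀ ε, P ε → ∃ ε', (∀ i ∉ I, ε' i = ε i) ∧
      ∃ i ∈ I, ¬ (P ε' ↔ P (Function.update ε' i (!ε' i))) := fun ε hε => by
    obtain ⟨δ, hδ, hδP⟩ := hP ε hε
    obtain ⟨ε', hε', i, hi, h, hflip⟩ := exists_flip_of_eq_off I hδ hε hδP
    exact ⟨ε', hε', i, hi, fun hiff => hflip (hiff.1 h)⟩
  choose! F hF_eq hF_mem using hboundary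
  refine card_le_mul_card_image_of_maps_to (f := F) (fun ε hε => ?_) _ fun c _ => ?_
  · simpa using hF_mem ε (mem_filter.1 hε).2
  · calc #{ε ∈ {ε | P ε} | F ε = c}
        ≤ #{ε : ι → Bool | ∀ i ∉ I, ε i = c i} := by
          refine card_le_card fun ε hε => ?_
          simp only [mem_filter, mem_univ, true_and] at hε ⊢
          exact fun i hi => hε.2 ▸ (hF_eq ε hε.1 i hi).symm
      _ ≤ 2 ^ #I := by convert card_filter_eq_off_le I c; rfl

end SignVectors

theorem exists_not_of_rprob_lt_one {n : ℕ} {P : (Fin n → Bool) → Prop} (h : rprob P < 1) :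
    ∃ ε, ¬ P ε := by
  by_contra! hP
  have : rprob P = 1 := by simp [rprob, filter_true_of_mem fun ε _ => hP ε]
  exact h.ne this

theorem radSum_eq_castAdd_add_natAdd {N m d : ℕ} (a : Fin (N + m) → EuclideanSpace ℝ (Fin d))
    (ε : Fin (N + m) → Bool) :
    radSum a ε = radSum (fun j => a (Fin.castAdd m j)) (fun j => ε (Fin.castAdd m j)) +
      radSum (fun j => a (Fin.natAdd N j)) (fun j => ε (Fin.natAdd N j)) :=
  Fin.sum_univ_add _

theorem exists_eq_off_radSum_not_mem {N m d : ℕ} {S : Set (EuclideanSpace ℝ (Fin d))}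
    (hS : ∀ b : Fin N → EuclideanSpace ℝ (Fin d), (∀ i, b i ≠ 0) →
      ∀ x : EuclideanSpace ℝ (Fin d), rprob (fun ε => radSum b ε + x ∈ S) < 1)
    {a : Fin (N + m) → EuclideanSpace ℝ (Fin d)} (ha : ∀ i, a i ≠ 0) (ε : Fin (N + m) → Bool) :
    ∃ δ, (∀ i : Fin (N + m), N ≤ (i : ℕ) → δ i = ε i) ∧ radSum a δ ∉ S := by
  set ε₂ : Fin m → Bool := fun j => ε (Fin.natAdd N j)
  obtain ⟨δ₁, hδ₁⟩ := exists_not_of_rprob_lt_one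
    (hS (fun j => a (Fin.castAdd m j)) (fun j => ha _) (radSum (fun j => a (Fin.natAdd N j)) ε₂))
  refine ⟨Fin.append δ₁ ε₂, fun i hi => ?_, by simpa [radSum_eq_castAdd_add_natAdd] using hδ₁⟩
  induction i using Fin.addCases with
  | left j => exact absurd hi (by simp)
  | right j => simp [ε₂]

theorem stmt16 {d n N : ℕ} (hNn : N ≤ n) (S : Set (EuclideanSpace ℝ (Fin d)))
    (hS : ∀ b : Fin N → EuclideanSpace ℝ (Fin d), (∀ i, b i ≠ 0) →
      ∀ x : EuclideanSpace ℝ (Fin d), rprob (fun ε => radSum b ε + x ∈ S) < 1)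
    (a : Fin n → EuclideanSpace ℝ (Fin d)) (ha : ∀ i, a i ≠ 0) :
    ((Finset.univ : Finset (Fin n → Bool)).filter fun ε => radSum a ε ∈ S).card ≤
      2 ^ N *
        ((Finset.univ : Finset (Fin n → Bool)).filter fun ε =>
          ∃ i : Fin n, (i : ℕ) < N ∧
            ¬ ((radSum a ε ∈ S) ↔ (radSum a (Function.update ε i (!ε i)) ∈ S))).card := by
  obtain ⟨m, rfl⟩ := Nat.exists_eq_add_of_le hNn
  have hcard : #{i : Fin (N + m) | (i : ℕ) < N} = N := by simp [Fin.card_filter_val_lt]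
  have h := card_filter_le_two_pow_mul_card_boundary (fun ε => radSum a ε ∈ S)
    {i : Fin (N + m) | (i : ℕ) < N} fun ε _ => by
      simpa using exists_eq_off_radSum_not_mem hS ha ε
  rw [hcard] at h
  convert h using 3
  simp
end
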